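/- arXiv:2201.03492 — 2 statements merged into one kernel-verified Lean document; each statement's English description precedes it below -/
import Mathlib

section
/- If all stratum-specific column risk ratios equal a common value ψ, then MHq = ψ. -/
theorem MHq_homogeneous (K : ℕ) (hK : 0 < K)
    (a b c d n : Fin K → ℝ) (ψ : ℝ)
    (ha : ∀ i, 0 < a i) (hb : ∀ i, 0 < b i) (hc : ∀ i, 0 < c i) (hd : ∀ i, 0 < d i)
    (hn : ∀ i, n i = a i + b i + c i + d i)
    (hhom : ∀ i, (a i / (a i + c i)) / (b i / (b i + d i)) = ψ) :
    (∑ i, a i * (b i + d i) / (a i + b i + n i)) /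
      (∑ i, b i * (a i + c i) / (a i + b i + n i)) = ψ := by
  have hden : ∀ i : Fin K, 0 < a i + b i + n i := by
    intro i; rw [hn i]; have := ha i; have := hb i; have := hc i; have := hd i; linarith
  have hkey : ∀ i : Fin K, a i * (b i + d i) = ψ * (b i * (a i + c i)) := by
    intro i
    have h1 : a i + c i ≠ 0 := by have := ha i; have := hc i; positivity
    have h2 : b i + d i ≠ 0 := by have := hb i; have := hd i; positivity
    have h3 : b i ≠ 0 := (hb i).ne'
    have := hhom i
    field_simp at this
    linarith [this]
  have hnum : (∑ i, a i * (b i + d i) / (a i + b i + n i))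
      = ψ * (∑ i, b i * (a i + c i) / (a i + b i + n i)) := by
    rw [Finset.mul_sum]
    exact Finset.sum_congr rfl fun i _ => by rw [hkey i]; ring
  have hpos : 0 < ∑ i, b i * (a i + c i) / (a i + b i + n i) := by
    apply Finset.sum_pos
    · intro i _
      have := hb i; have := ha i; have := hc i; have := hden i
      positivity
    · exact Finset.univ_nonempty_iff.mpr ⟨⟨0, hK⟩⟩
  rw [hnum, mul_div_assoc, div_self hpos.ne', mul_one]
end

section
/- For a single stratum (K=1) with positive entries a, b, c, d, the SKM variance estimator Var_SKM[ln(MHq)] = (1/(RS))(V/P + R²/P − 2(Q + RS) + P(W + S²)) reduces to 1/a − 1/(a+c) + 1/b − 1/(b+d), where R = a(b+d)/(a+b+n), S = b(a+c)/(a+b+n), P = a(b+d)/(b(a+c)), V = (b+d)²((n+b)²ac/((a+b+n)⁴(a+c)) + a²bd/((a+b+n)⁴(b+d))), W = (a+c)²(b²ac/((a+b+n)⁴(a+c)) + (n+a)²bd/((a+b+n)⁴(b+d))), Q = −((a+c)(b+d)/(a+b+n)⁴)(abc(b+n)/(a+c) + abd(a+n)/(b+d)), and n = a+b+c+d. -/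
theorem SKM_variance_single_stratum (a b c d n R S P V W Q : ℝ)
    (ha : 0 < a) (hb : 0 < b) (hc : 0 < c) (hd : 0 < d)
    (hn : n = a + b + c + d)
    (hR : R = a * (b + d) / (a + b + n))
    (hS : S = b * (a + c) / (a + b + n))
    (hP : P = a * (b + d) / (b * (a + c)))
    (hV : V = (b + d) ^ 2 *
      ((n + b) ^ 2 / (a + b + n) ^ 4 * (a * c / (a + c)) +
        a ^ 2 / (a + b + n) ^ 4 * (b * d / (b + d))))
    (hW : W = (a + c) ^ 2 *
      (b ^ 2 / (a + b + n) ^ 4 * (a * c / (a + c)) +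
        (n + a) ^ 2 / (a + b + n) ^ 4 * (b * d / (b + d))))
    (hQ : Q = -((a + c) * (b + d) / (a + b + n) ^ 4) *
      (a * b * c * (b + n) / (a + c) + a * b * d * (a + n) / (b + d))) :
    1 / (R * S) * (1 / P * (V + R ^ 2) - 2 * (Q + R * S) + P * (W + S ^ 2)) =
      1 / a - 1 / (a + c) + 1 / b - 1 / (b + d) := by
  have hA : (0:ℝ) < a + c := by linarith
  have hB : (0:ℝ) < b + d := by linarith
  have hT : (0:ℝ) < a + b + n := by rw [hn]; linarith
  clear hn
  have hA' := hA.ne'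
  have hB' := hB.ne'
  have hT' := hT.ne'
  have ha' := ha.ne'
  have hb' := hb.ne'
  -- key cancellations
  have e1 : 1 / P * R ^ 2 = R * S := by
    rw [hP, hR, hS]; field_simp
  have e2 : P * S ^ 2 = R * S := by
    rw [hP, hR, hS]; field_simp
  have e3 : 1 / P * V = (b * c * (b + d) * (n + b) ^ 2 + a * b ^ 2 * d * (a + c)) / (a + b + n) ^ 4 := by
    rw [hP, hV]; field_simp
  have e4 : P * W = (a ^ 2 * b * c * (b + d) + a * d * (a + c) * (n + a) ^ 2) / (a + b + n) ^ 4 := by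
    rw [hP, hW]; field_simp
  have e5 : -2 * Q = (2 * a * b * c * (b + d) * (b + n) + 2 * a * b * d * (a + c) * (a + n)) / (a + b + n) ^ 4 := by
    rw [hQ]; field_simp
  have key : 1 / P * (V + R ^ 2) - 2 * (Q + R * S) + P * (W + S ^ 2)
      = (a * d * (a + c) + b * c * (b + d)) / (a + b + n) ^ 2 := by
    have : 1 / P * (V + R ^ 2) - 2 * (Q + R * S) + P * (W + S ^ 2)
        = 1 / P * V + (-2 * Q) + P * W + (1 / P * R ^ 2 - R * S) + (P * S ^ 2 - R * S) := by ring
    rw [this, e1, e2, e3, e4, e5]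
    field_simp
    ring
  rw [key, hR, hS]
  field_simp
  ring
end
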